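/- arXiv:1212.5402 — 4 statements merged into one kernel-verified Lean document; each statement's English description precedes it below -/
import Mathlib

section
/- Let β > 0 and 1 < r < ∞. There exists a constant c = c(β, r) > 0 such that for every sequence {a_k}_{k≥1} of nonnegative real numbers and every increasing sequence {ν_n}_{n≥0} of positive reals with ν_0 = 1, one has Σ_{n=0}^∞ 2^{-nβ} (Σ_{1 ≤ k ≤ ν_n} a_k)^{1/r} ≤ c · Σ_{n=1}^∞ 2^{-nβ} (Σ_{ν_{n-1} ≤ k ≤ ν_n} a_k)^{1/r}. -/
/-!
Write `S n = ∑_{1 ≤ k ≤ ν n} a k` and `B m = ∑_{ν m ≤ k ≤ ν (m+1)} a k`. Since `ν 0 ≤ 1`, the blocks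
`[ν m, ν (m+1)]`, `m ≤ n`, cover `[1, ν n]`, so `S n ≤ ∑_{m ≤ n} B m`. Subadditivity of
`t ↦ t ^ (1/r)` moves the power inside, and exchanging the order of summation turns
`∑_n 2^{-nβ} ∑_{m ≤ n} B m ^ (1/r)` into a Cauchy product with the geometric series `∑ 2^{-iβ}`,
which gives the inequality with `c = 2^β / (1 - 2^{-β})`. In `ℝ≥0∞` all the series converge.
-/

open scoped ENNReal
open Finset

theorem ENNReal.tsum_mul_tsum_eq_tsum_sum_range (f g : ℕ → ℝ≥0∞) :
    (∑' n, f n) * ∑' n, g n = ∑' n, ∑ k ∈ range (n + 1), f k * g (n - k) := by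
  simp_rw [← Nat.sum_antidiagonal_eq_sum_range_succ fun k l ↦ f k * g l, ← ENNReal.tsum_mul_right,
    ← ENNReal.tsum_mul_left, ← ENNReal.tsum_prod' (f := fun x : ℕ × ℕ ↦ f x.1 * g x.2),
    ← HasAntidiagonal.sigmaAntidiagonalEquivProd.tsum_eq (fun x : ℕ × ℕ ↦ f x.1 * g x.2),
    ENNReal.tsum_sigma', ← Finset.tsum_subtype]
  rfl

theorem ENNReal.tsum_pow_mul_rpow_le_of_le_sum_range {q : ℝ≥0∞} {p : ℝ} (hp0 : 0 < p)
    (hp1 : p ≤ 1) {s b : ℕ → ℝ≥0∞} (hsb : ∀ n, s n ≤ ∑ m ∈ range (n + 1), b m) :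
    ∑' n, q ^ n * s n ^ p ≤ (1 - q)⁻¹ * ∑' n, q ^ n * b n ^ p := by
  have hsubadd (n : ℕ) : s n ^ p ≤ ∑ m ∈ range (n + 1), b m ^ p :=
    (ENNReal.rpow_le_rpow (hsb n) hp0.le).trans <|
      le_sum_of_subadditive (· ^ p) (ENNReal.zero_rpow_of_pos hp0).le
        (fun x y ↦ ENNReal.rpow_add_le_add_rpow x y hp0.le hp1) _ _
  calc ∑' n, q ^ n * s n ^ p
      ≤ ∑' n, ∑ m ∈ range (n + 1), q ^ m * b m ^ p * q ^ (n - m) := by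
        refine ENNReal.tsum_le_tsum fun n ↦ ?_
        calc q ^ n * s n ^ p ≤ q ^ n * ∑ m ∈ range (n + 1), b m ^ p := by grw [hsubadd n]
          _ = _ := by
            rw [mul_sum]
            refine sum_congr rfl fun m hm ↦ ?_
            rw [mul_right_comm, ← pow_add, Nat.add_sub_cancel' (Nat.lt_succ_iff.1 (mem_range.1 hm))]
    _ = (∑' m, q ^ m * b m ^ p) * ∑' i, q ^ i :=
        (ENNReal.tsum_mul_tsum_eq_tsum_sum_range _ _).symm
    _ = (1 - q)⁻¹ * ∑' n, q ^ n * b n ^ p := by rw [ENNReal.tsum_geometric, mul_comm]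

lemma ENNReal.ofReal_rpow_neg_mul_mul_rpow {t : ℝ} (ht : 0 ≤ t) (β : ℝ) (n : ℕ) {x p : ℝ}
    (hx : 0 ≤ x) (hp : 0 ≤ p) :
    ENNReal.ofReal (t ^ (-(n : ℝ) * β) * x ^ p) =
      ENNReal.ofReal (t ^ (-β)) ^ n * ENNReal.ofReal x ^ p := by
  rw [ENNReal.ofReal_mul (by positivity), ENNReal.ofReal_rpow_of_nonneg hx hp,
    ← ENNReal.ofReal_pow (by positivity), ← Real.rpow_natCast, ← Real.rpow_mul ht, neg_mul_comm,
    mul_comm (n : ℝ)]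

lemma sum_Icc_one_floor_le_sum_blocks {a : ℕ → ℝ} (ha : ∀ k, 0 ≤ a k) {ν : ℕ → ℝ}
    (hν : Monotone ν) (hν0 : ν 0 ≤ 1) (n : ℕ) :
    ∑ k ∈ Icc 1 ⌊ν n⌋₊, a k ≤ ∑ m ∈ range (n + 1), ∑ k ∈ Icc ⌈ν m⌉₊ ⌊ν (m + 1)⌋₊, a k := by
  have hsum_mono {s t : Finset ℕ} (h : s ⊆ t) : ∑ k ∈ s, a k ≤ ∑ k ∈ t, a k :=
    sum_le_sum_of_subset_of_nonneg h fun k _ _ ↦ ha k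
  -- The induction step is `S (n + 1) ≤ S n + B n`, so it is run on the shifted sums.
  suffices h : ∀ n, ∑ k ∈ Icc 1 ⌊ν (n + 1)⌋₊, a k ≤
      ∑ m ∈ range (n + 1), ∑ k ∈ Icc ⌈ν m⌉₊ ⌊ν (m + 1)⌋₊, a k from
    (hsum_mono (Icc_subset_Icc_right (Nat.floor_le_floor (hν n.le_succ)))).trans (h n)
  intro n
  induction n with
  | zero =>
    rw [sum_range_one]
    exact hsum_mono (Icc_subset_Icc_left (Nat.ceil_le.2 (by simpa using hν0)))
  | succ n ih =>
    have hcover : Icc 1 ⌊ν (n + 2)⌋₊ ⊆ Icc 1 ⌊ν (n + 1)⌋₊ ∪ Icc ⌈ν (n + 1)⌉₊ ⌊ν (n + 2)⌋₊ := by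
      have := Nat.ceil_le_floor_add_one (ν (n + 1))
      intro k
      simp only [mem_union, mem_Icc]
      omega
    have hunion := sum_union_inter (s₁ := Icc 1 ⌊ν (n + 1)⌋₊)
      (s₂ := Icc ⌈ν (n + 1)⌉₊ ⌊ν (n + 2)⌋₊) (f := a)
    have hinter := sum_nonneg fun k (_ : k ∈ Icc 1 ⌊ν (n + 1)⌋₊ ∩
      Icc ⌈ν (n + 1)⌉₊ ⌊ν (n + 2)⌋₊) ↦ ha k
    rw [sum_range_succ]
    linarith [hsum_mono hcover]

/-- Lemma 2.2 (Hardy-type inequality): for `β > 0`, `1 < r < ∞` there is `c > 0` such that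
for all nonnegative `{a_k}_{k≥1}` and increasing positive `{ν_n}_{n≥0}` with `ν_0 = 1`,
`∑_{n≥0} 2^{-nβ} (∑_{1≤k≤ν_n} a_k)^{1/r} ≤ c ∑_{n≥1} 2^{-nβ} (∑_{ν_{n-1}≤k≤ν_n} a_k)^{1/r}`. -/
theorem stmt2 (β r : ℝ) (hβ : 0 < β) (hr : 1 < r) :
    ∃ c : ℝ, 0 < c ∧
      ∀ (a : ℕ → ℝ), (∀ k, 0 ≤ a k) →
      ∀ (ν : ℕ → ℝ), StrictMono ν → (∀ n, 0 < ν n) → ν 0 = 1 →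
        (∑' n : ℕ, ENNReal.ofReal
            ((2 : ℝ) ^ (-(n : ℝ) * β) * (∑ k ∈ Finset.Icc 1 ⌊ν n⌋₊, a k) ^ (1 / r))) ≤
          ENNReal.ofReal c *
            ∑' n : ℕ, ENNReal.ofReal
              ((2 : ℝ) ^ (-((n : ℝ) + 1) * β) *
                (∑ k ∈ Finset.Icc ⌈ν n⌉₊ ⌊ν (n + 1)⌋₊, a k) ^ (1 / r)) := by
  have hq_lt_one : (2 : ℝ) ^ (-β) < 1 :=
    Real.rpow_lt_one_of_one_lt_of_neg one_lt_two (neg_neg_of_pos hβ)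
  refine ⟨2 ^ β / (1 - 2 ^ (-β)), div_pos (by positivity) (sub_pos.2 hq_lt_one), ?_⟩
  intro a ha ν hν _ hν0
  set q := ENNReal.ofReal ((2 : ℝ) ^ (-β))
  have hc : ENNReal.ofReal (2 ^ β / (1 - 2 ^ (-β))) * q = (1 - q)⁻¹ := by
    rw [← ENNReal.ofReal_mul (by positivity), div_mul_eq_mul_div, ← Real.rpow_add two_pos,
      add_neg_cancel, Real.rpow_zero, one_div, ENNReal.ofReal_inv_of_pos (sub_pos.2 hq_lt_one),
      ENNReal.ofReal_sub _ (by positivity), ENNReal.ofReal_one]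
  have hp0 : 0 < 1 / r := by positivity
  have hp1 : 1 / r ≤ 1 := (div_le_one (by linarith)).2 hr.le
  have hblock_nonneg (m : ℕ) : 0 ≤ ∑ k ∈ Icc ⌈ν m⌉₊ ⌊ν (m + 1)⌋₊, a k :=
    sum_nonneg fun k _ ↦ ha k
  calc _ = ∑' n : ℕ, q ^ n * ENNReal.ofReal (∑ k ∈ Icc 1 ⌊ν n⌋₊, a k) ^ (1 / r) := by
        congr! 2 with n
        exact ENNReal.ofReal_rpow_neg_mul_mul_rpow zero_le_two β n
          (sum_nonneg fun k _ ↦ ha k) hp0.le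
    _ ≤ (1 - q)⁻¹ *
          ∑' n : ℕ, q ^ n * ENNReal.ofReal (∑ k ∈ Icc ⌈ν n⌉₊ ⌊ν (n + 1)⌋₊, a k) ^ (1 / r) := by
        refine ENNReal.tsum_pow_mul_rpow_le_of_le_sum_range hp0 hp1 fun n ↦ ?_
        rw [← ENNReal.ofReal_sum_of_nonneg fun m _ ↦ hblock_nonneg m]
        exact ENNReal.ofReal_le_ofReal (sum_Icc_one_floor_le_sum_blocks ha hν.monotone hν0.le n)
    _ = _ := by
        rw [← hc, mul_assoc, ← ENNReal.tsum_mul_left]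
        simp_rw [← mul_assoc, ← pow_succ']
        congr! 3 with n
        rw [← Nat.cast_succ]
        exact (ENNReal.ofReal_rpow_neg_mul_mul_rpow zero_le_two β _ (hblock_nonneg n) hp0.le).symm
end

section
/- Let 1 ≤ p < ∞. Let I = [a,b] ⊂ [0,1], N ∈ ℕ, and H_0, ..., H_{N-1} ≥ 0. Let F be the continuous 1-periodic 'triangle function' that vanishes outside I, vanishes at the points ξ_j = a + j(b-a)/N for 0 ≤ j ≤ N, takes the value H_j at the midpoints ξ_j* = a + (j + 1/2)(b-a)/N, and is linear in between. Then the total p-variation of F over a period equals 2^{1/p} (Σ_{j=0}^{N-1} H_j^p)^{1/p}. -/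
open scoped ENNReal
open Filter MeasureTheory

noncomputable section

/-- A sequence of nonoverlapping closed subintervals `[a n, b n]` of a period `[0,1]`:
the intervals have disjoint interiors. -/
def Nonoverlapping (a b : ℕ → ℝ) : Prop :=
  (∀ n, 0 ≤ a n ∧ a n ≤ b n ∧ b n ≤ 1) ∧
  ∀ m n, m ≠ n → Set.Ioo (a m) (b m) ∩ Set.Ioo (a n) (b n) = ∅

/-- `∑_n |f(I_n)|^p` for the family of intervals `I_n = [a n, b n]`. -/
def vpSum (p : ℝ) (f : ℝ → ℝ) (a b : ℕ → ℝ) : ℝ≥0∞ :=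
  ∑' n, ENNReal.ofReal (|f (b n) - f (a n)| ^ p)

/-- The `p`-variation of `f` over a period. -/
def vp (p : ℝ) (f : ℝ → ℝ) : ℝ≥0∞ :=
  ⨆ (a : ℕ → ℝ) (b : ℕ → ℝ) (_ : Nonoverlapping a b), (vpSum p f a b) ^ (1 / p)

/-- The modulus of `p`-continuity `ω_{1-1/p}(f; δ)`. -/
def pMod (p : ℝ) (f : ℝ → ℝ) (δ : ℝ) : ℝ≥0∞ :=
  ⨆ (a : ℕ → ℝ) (b : ℕ → ℝ) (_ : Nonoverlapping a b ∧ ∀ n, b n - a n ≤ δ),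
    (vpSum p f a b) ^ (1 / p)

/-- The `Λ`-variation of `f` over a period; the `n`-th interval (counting from `0`)
is paired with the weight `λ_{n+1}` (weights are indexed from `1`). -/
def vLam (lam : ℕ → ℝ) (f : ℝ → ℝ) : ℝ≥0∞ :=
  ⨆ (a : ℕ → ℝ) (b : ℕ → ℝ) (_ : Nonoverlapping a b),
    ∑' n, ENNReal.ofReal (|f (b n) - f (a n)| / lam (n + 1))

/-- `Λ = {λ_n}_{n ≥ 1} ∈ 𝒮`: positive, nondecreasing, `λ_n → ∞`, `∑ 1/λ_n = ∞`. -/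
def IsLambdaSeq (lam : ℕ → ℝ) : Prop :=
  (∀ n, 1 ≤ n → 0 < lam n) ∧ (∀ m n, 1 ≤ m → m ≤ n → lam m ≤ lam n) ∧
  Tendsto lam atTop atTop ∧ ¬ Summable (fun n => 1 / lam (n + 1))

/-- The hypotheses describing the triangle function `F = F(I, N, H)` of Definition 2.1:
`F` is continuous, 1-periodic, vanishes on `[0,1] \ [a,b]` and at the nodes
`ξ_j = a + j h` (`h = (b-a)/N`), equals `H j` at the midpoints `ξ_j* = a + (j+1/2) h`,
and is linear on each half-interval. -/
def IsTriangleFun (a b : ℝ) (N : ℕ) (H : ℕ → ℝ) (F : ℝ → ℝ) : Prop :=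
  Continuous F ∧ Function.Periodic F 1 ∧
  (∀ x ∈ Set.Icc (0:ℝ) 1, x ∉ Set.Icc a b → F x = 0) ∧
  (∀ j : ℕ, j ≤ N → F (a + j * ((b - a) / N)) = 0) ∧
  (∀ j : ℕ, j < N → F (a + (j + 1 / 2) * ((b - a) / N)) = H j) ∧
  (∀ j : ℕ, j < N → ∀ x ∈ Set.Icc (a + j * ((b - a) / N)) (a + (j + 1 / 2) * ((b - a) / N)),
    F x = H j * (x - (a + j * ((b - a) / N))) / (((b - a) / N) / 2)) ∧
  (∀ j : ℕ, j < N → ∀ x ∈ Set.Icc (a + (j + 1 / 2) * ((b - a) / N)) (a + (j + 1) * ((b - a) / N)),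
    F x = H j * ((a + (j + 1) * ((b - a) / N)) - x) / (((b - a) / N) / 2))


/-!
Cut `[a, b]` at the nodes `ξ_j` and the midpoints `ξ_j*` into `2N` pieces; on each piece `F`
is monotone with increment `± H_j`, so these pieces alone give the sum `2 ∑ H_j ^ p`.
Conversely, `F ≥ 0` vanishes at the nodes and is maximal at the midpoint of each cell
`[ξ_j, ξ_{j+1}]`, and cutting an interval at a point where `F` has an extremum keeps the larger
of the two increments; hence every interval contains a subinterval lying in a single piece
with at least the same increment. On a monotone piece, superadditivity of `t ↦ t ^ p`
(`p ≥ 1`) bounds the contribution of disjoint subintervals by the `p`-th power of the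
increment of the whole piece.
-/

open Set

theorem Real.sum_rpow_le_rpow_sum {ι : Type*} {p : ℝ} (hp : 1 ≤ p) (s : Finset ι) {f : ι → ℝ}
    (hf : ∀ i ∈ s, 0 ≤ f i) : ∑ i ∈ s, f i ^ p ≤ (∑ i ∈ s, f i) ^ p := by
  classical
  induction s using Finset.induction_on with
  | empty => simp [Real.zero_rpow (by positivity : p ≠ 0)]
  | insert i s hi ih =>
    rw [Finset.sum_insert hi, Finset.sum_insert hi]
    have hs : ∀ j ∈ s, 0 ≤ f j := fun j hj => hf j (Finset.mem_insert_of_mem hj)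
    calc f i ^ p + ∑ j ∈ s, f j ^ p ≤ f i ^ p + (∑ j ∈ s, f j) ^ p := by gcongr; exact ih hs
      _ ≤ (f i + ∑ j ∈ s, f j) ^ p :=
        Real.add_rpow_le_rpow_add (hf i (Finset.mem_insert_self i s)) (Finset.sum_nonneg hs) hp

theorem Finset.sum_range_two_mul_div_two {M : Type*} [AddCommMonoid M] (f : ℕ → M) (n : ℕ) :
    ∑ k ∈ Finset.range (2 * n), f (k / 2) = 2 • ∑ j ∈ Finset.range n, f j := by
  induction n with
  | zero => simp
  | succ n ih =>
    rw [mul_add_one, Finset.sum_range_succ, Finset.sum_range_succ, ih, Finset.sum_range_succ,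
      show (2 * n + 1) / 2 = n by omega, show 2 * n / 2 = n by omega, smul_add, two_nsmul (f n),
      add_assoc]

theorem abs_sub_le_max_of_extremum {x y z : ℝ} (h : (z ≤ x ∧ z ≤ y) ∨ (x ≤ z ∧ y ≤ z)) :
    |y - x| ≤ max |z - x| |y - z| := by
  have := le_abs_self (z - x); have := neg_le_abs (z - x)
  have := le_abs_self (y - z); have := neg_le_abs (y - z)
  rw [le_max_iff]
  rcases h with ⟨h₁, h₂⟩ | ⟨h₁, h₂⟩ <;> rcases le_total x y with h | h
  · exact .inr (abs_le.2 ⟨by linarith, by linarith⟩)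
  · exact .inl (abs_le.2 ⟨by linarith, by linarith⟩)
  · exact .inl (abs_le.2 ⟨by linarith, by linarith⟩)
  · exact .inr (abs_le.2 ⟨by linarith, by linarith⟩)

theorem MonotoneOn.sum_sub_le_of_pairwiseDisjoint {ι : Type*} {g : ℝ → ℝ} {u v : ℝ}
    (hg : MonotoneOn g (Icc u v)) (huv : u ≤ v) {s : Finset ι} {α β : ι → ℝ}
    (hs : ∀ i ∈ s, u ≤ α i ∧ α i ≤ β i ∧ β i ≤ v)
    (hd : (s : Set ι).PairwiseDisjoint fun i => Ioo (α i) (β i)) :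
    ∑ i ∈ s, (g (β i) - g (α i)) ≤ g v - g u := by
  classical
  -- peel off the interval with the largest left endpoint: the others end before it starts
  induction s using Finset.induction_on_max_value α generalizing v with
  | empty => simpa using hg ⟨le_rfl, huv⟩ ⟨huv, le_rfl⟩ huv
  | insert i s hi hmax ih =>
    have hs' : ∀ j ∈ s, u ≤ α j ∧ α j ≤ β j ∧ β j ≤ v := fun j hj =>
      hs j (Finset.mem_insert_of_mem hj)
    have hd' := hd.subset (Finset.coe_subset.2 (Finset.subset_insert i s))
    obtain ⟨hui, hαβ, hβv⟩ := hs i (Finset.mem_insert_self i s)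
    rw [Finset.sum_insert hi]
    rcases hαβ.eq_or_lt with hdeg | hlt
    · rw [hdeg, sub_self, zero_add]
      exact ih hg huv hs' hd'
    have hleft : ∀ j ∈ s, β j ≤ α i := by
      intro j hj
      have hdisj := hd (Finset.mem_insert_of_mem hj) (Finset.mem_insert_self i s)
        (by rintro rfl; exact hi hj)
      rw [Function.onFun, Ioo_disjoint_Ioo, max_eq_right (hmax j hj), min_le_iff] at hdisj
      exact hdisj.resolve_right hlt.not_ge
    have hrest := ih (hg.mono (Icc_subset_Icc le_rfl (hαβ.trans hβv))) hui
      (fun j hj => ⟨(hs' j hj).1, (hs' j hj).2.1, hleft j hj⟩) hd'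
    have hlast := hg ⟨hui.trans hαβ, hβv⟩ ⟨huv, le_rfl⟩ hβv
    linarith

theorem MonotoneOn.sum_abs_sub_rpow_le {ι : Type*} {g : ℝ → ℝ} {u v p : ℝ}
    (hg : MonotoneOn g (Icc u v)) (huv : u ≤ v) (hp : 1 ≤ p) {s : Finset ι} {α β : ι → ℝ}
    (hs : ∀ i ∈ s, u ≤ α i ∧ α i ≤ β i ∧ β i ≤ v)
    (hd : (s : Set ι).PairwiseDisjoint fun i => Ioo (α i) (β i)) :
    ∑ i ∈ s, |g (β i) - g (α i)| ^ p ≤ |g v - g u| ^ p := by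
  have hinc : ∀ i ∈ s, 0 ≤ g (β i) - g (α i) := fun i hi => by
    obtain ⟨huα, hαβ, hβv⟩ := hs i hi
    exact sub_nonneg.2 (hg ⟨huα, hαβ.trans hβv⟩ ⟨huα.trans hαβ, hβv⟩ hαβ)
  rw [abs_of_nonneg (sub_nonneg.2 (hg ⟨le_rfl, huv⟩ ⟨huv, le_rfl⟩ huv))]
  calc ∑ i ∈ s, |g (β i) - g (α i)| ^ p = ∑ i ∈ s, (g (β i) - g (α i)) ^ p :=
        Finset.sum_congr rfl fun i hi => by rw [abs_of_nonneg (hinc i hi)]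
    _ ≤ (∑ i ∈ s, (g (β i) - g (α i))) ^ p := Real.sum_rpow_le_rpow_sum hp s hinc
    _ ≤ (g v - g u) ^ p := by
        gcongr
        · exact Finset.sum_nonneg hinc
        · exact hg.sum_sub_le_of_pairwiseDisjoint huv hs hd

theorem AntitoneOn.sum_abs_sub_rpow_le {ι : Type*} {g : ℝ → ℝ} {u v p : ℝ}
    (hg : AntitoneOn g (Icc u v)) (huv : u ≤ v) (hp : 1 ≤ p) {s : Finset ι} {α β : ι → ℝ}
    (hs : ∀ i ∈ s, u ≤ α i ∧ α i ≤ β i ∧ β i ≤ v)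
    (hd : (s : Set ι).PairwiseDisjoint fun i => Ioo (α i) (β i)) :
    ∑ i ∈ s, |g (β i) - g (α i)| ^ p ≤ |g v - g u| ^ p := by
  simpa only [Pi.neg_apply, neg_sub_neg, abs_sub_comm] using
    hg.neg.sum_abs_sub_rpow_le huv hp hs hd

def IncrementsDominatedBy (g : ℝ → ℝ) (P : ℝ → ℝ → Prop) (u v : ℝ) : Prop :=
  ∀ x y, u ≤ x → x ≤ y → y ≤ v →
    ∃ α β, P α β ∧ Ioo α β ⊆ Ioo x y ∧ |g y - g x| ≤ |g β - g α|

namespace IncrementsDominatedBy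

variable {g : ℝ → ℝ} {P : ℝ → ℝ → Prop} {u v : ℝ}

theorem of_forall (hP : ∀ x y, u ≤ x → x ≤ y → y ≤ v → P x y) : IncrementsDominatedBy g P u v :=
  fun x y hux hxy hyv => ⟨x, y, hP x y hux hxy hyv, subset_rfl, le_rfl⟩

theorem of_eqOn_const {c C : ℝ} (hc : P c c) (hg : EqOn g (fun _ => C) (Icc u v)) :
    IncrementsDominatedBy g P u v := fun x y hux hxy hyv =>
  ⟨c, c, hc, by simp, by
    rw [hg ⟨hux, hxy.trans hyv⟩, hg ⟨hux.trans hxy, hyv⟩, sub_self, abs_zero]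
    exact abs_nonneg _⟩

theorem split {c : ℝ}
    (hc : (∀ z ∈ Icc u v, g c ≤ g z) ∨ (∀ z ∈ Icc u v, g z ≤ g c))
    (h₁ : IncrementsDominatedBy g P u c) (h₂ : IncrementsDominatedBy g P c v) :
    IncrementsDominatedBy g P u v := by
  intro x y hux hxy hyv
  rcases le_or_gt y c with hyc | hcy
  · exact h₁ x y hux hxy hyc
  rcases le_or_gt c x with hcx | hxc
  · exact h₂ x y hcx hxy hyv
  have hx : x ∈ Icc u v := ⟨hux, hxy.trans hyv⟩
  have hy : y ∈ Icc u v := ⟨hux.trans hxy, hyv⟩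
  have hext : (g c ≤ g x ∧ g c ≤ g y) ∨ (g x ≤ g c ∧ g y ≤ g c) :=
    hc.imp (fun h => ⟨h x hx, h y hy⟩) (fun h => ⟨h x hx, h y hy⟩)
  rcases le_max_iff.1 (abs_sub_le_max_of_extremum hext) with hle | hle
  · obtain ⟨α, β, hP, hsub, hinc⟩ := h₁ x c hux hxc.le le_rfl
    exact ⟨α, β, hP, hsub.trans (Ioo_subset_Ioo_right hcy.le), hle.trans hinc⟩
  · obtain ⟨α, β, hP, hsub, hinc⟩ := h₂ c y le_rfl hcy.le hyv
    exact ⟨α, β, hP, hsub.trans (Ioo_subset_Ioo_left hxc.le), hle.trans hinc⟩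

end IncrementsDominatedBy

theorem nonoverlapping_of_monotone {c : ℕ → ℝ} (hc : Monotone c) (h0 : 0 ≤ c 0)
    (h1 : ∀ n, c n ≤ 1) : Nonoverlapping c (fun n => c (n + 1)) := by
  refine ⟨fun n => ⟨h0.trans (hc n.zero_le), hc n.le_succ, h1 _⟩, fun m n hmn => ?_⟩
  rw [← disjoint_iff_inter_eq_empty, Ioo_disjoint_Ioo]
  rcases hmn.lt_or_gt with h | h
  · exact min_le_of_left_le (le_max_of_le_right (hc h))
  · exact min_le_of_right_le (le_max_of_le_left (hc h))

theorem vpSum_le_ofReal {p S : ℝ} {f : ℝ → ℝ} {A B : ℕ → ℝ}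
    (h : ∀ s : Finset ℕ, ∑ n ∈ s, |f (B n) - f (A n)| ^ p ≤ S) :
    vpSum p f A B ≤ ENNReal.ofReal S :=
  ENNReal.tsum_le_of_sum_range_le fun n => by
    rw [← ENNReal.ofReal_sum_of_nonneg fun _ _ => by positivity]
    exact ENNReal.ofReal_le_ofReal (h _)

theorem vp_eq_rpow_of_forall_le {p : ℝ} (hp : 0 ≤ p) {f : ℝ → ℝ} {M : ℝ≥0∞}
    (hle : ∀ A B, Nonoverlapping A B → vpSum p f A B ≤ M) {A B : ℕ → ℝ}
    (hAB : Nonoverlapping A B) (hM : vpSum p f A B = M) : vp p f = M ^ (1 / p) :=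
  le_antisymm
    (iSup₂_le fun A B => iSup_le fun h => ENNReal.rpow_le_rpow (hle A B h) (by positivity))
    (hM ▸ le_iSup₂_of_le A B (le_iSup_of_le hAB le_rfl))

/-- The `k`-th point of the uniform partition of `[a, b]` into `2N` pieces: `ξ_j` for `k = 2j`
and `ξ_j*` for `k = 2j + 1`. -/
def triangleBreakpoint (a b : ℝ) (N k : ℕ) : ℝ := a + k * ((b - a) / N / 2)

def InTrianglePiece (a b : ℝ) (N : ℕ) (α β : ℝ) : Prop :=
  ∃ k < 2 * N, triangleBreakpoint a b N k ≤ α ∧ α ≤ β ∧ β ≤ triangleBreakpoint a b N (k + 1)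

section TriangleBreakpoint

variable {a b : ℝ} {N : ℕ}

theorem triangleBreakpoint_monotone (hab : a ≤ b) : Monotone (triangleBreakpoint a b N) :=
  fun k l hkl => by
    have : 0 ≤ (b - a) / N / 2 := by have := sub_nonneg.2 hab; positivity
    unfold triangleBreakpoint
    gcongr

@[simp]
theorem triangleBreakpoint_zero : triangleBreakpoint a b N 0 = a := by
  simp [triangleBreakpoint]

theorem triangleBreakpoint_two_mul (j : ℕ) :
    triangleBreakpoint a b N (2 * j) = a + j * ((b - a) / N) := by
  unfold triangleBreakpoint; push_cast; ring

theorem triangleBreakpoint_two_mul_add_one (j : ℕ) :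
    triangleBreakpoint a b N (2 * j + 1) = a + (j + 1 / 2) * ((b - a) / N) := by
  unfold triangleBreakpoint; push_cast; ring

theorem triangleBreakpoint_two_mul_add_two (j : ℕ) :
    triangleBreakpoint a b N (2 * j + 2) = a + (j + 1) * ((b - a) / N) := by
  unfold triangleBreakpoint; push_cast; ring

theorem triangleBreakpoint_two_mul_self (hN : N ≠ 0) : triangleBreakpoint a b N (2 * N) = b := by
  rw [triangleBreakpoint_two_mul]
  field_simp
  ring

theorem incrementsDominatedBy_trianglePiece {g : ℝ → ℝ} {k : ℕ} (hk : k < 2 * N) :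
    IncrementsDominatedBy g (InTrianglePiece a b N) (triangleBreakpoint a b N k)
      (triangleBreakpoint a b N (k + 1)) :=
  .of_forall fun _ _ hx hxy hy => ⟨k, hk, hx, hxy, hy⟩

theorem inTrianglePiece_self (hab : a ≤ b) (hN : 0 < N) : InTrianglePiece a b N a a :=
  ⟨0, by omega, triangleBreakpoint_zero.le, le_rfl,
    by simpa using triangleBreakpoint_monotone (N := N) hab (Nat.zero_le 1)⟩

theorem nonoverlapping_triangleBreakpoint (ha : 0 ≤ a) (hab : a ≤ b)
    (hb : b ≤ 1) (hN : N ≠ 0) :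
    Nonoverlapping (fun n => triangleBreakpoint a b N (min n (2 * N)))
      (fun n => triangleBreakpoint a b N (min (n + 1) (2 * N))) :=
  nonoverlapping_of_monotone
    ((triangleBreakpoint_monotone hab).comp fun _ _ h => min_le_min_right _ h)
    (by simpa using ha)
    fun _ => (triangleBreakpoint_monotone hab (min_le_right _ _)).trans
      ((triangleBreakpoint_two_mul_self hN).trans_le hb)

end TriangleBreakpoint

namespace IsTriangleFun

variable {a b : ℝ} {N : ℕ} {H : ℕ → ℝ} {F : ℝ → ℝ} {j : ℕ}

theorem apply_breakpoint_two_mul (hF : IsTriangleFun a b N H F) (hj : j ≤ N) :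
    F (triangleBreakpoint a b N (2 * j)) = 0 := by
  rw [triangleBreakpoint_two_mul]; exact hF.2.2.2.1 j hj

theorem apply_breakpoint_two_mul_add_one (hF : IsTriangleFun a b N H F) (hj : j < N) :
    F (triangleBreakpoint a b N (2 * j + 1)) = H j := by
  rw [triangleBreakpoint_two_mul_add_one]; exact hF.2.2.2.2.1 j hj

theorem monotoneOn_left_half (hF : IsTriangleFun a b N H F) (hab : a ≤ b) (hH : 0 ≤ H j)
    (hj : j < N) :
    MonotoneOn F
      (Icc (triangleBreakpoint a b N (2 * j)) (triangleBreakpoint a b N (2 * j + 1))) := by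
  rw [triangleBreakpoint_two_mul, triangleBreakpoint_two_mul_add_one]
  intro x hx y hy hxy
  have : 0 ≤ (b - a) / N / 2 := by have := sub_nonneg.2 hab; positivity
  rw [hF.2.2.2.2.2.1 j hj x hx, hF.2.2.2.2.2.1 j hj y hy]
  gcongr

theorem antitoneOn_right_half (hF : IsTriangleFun a b N H F) (hab : a ≤ b) (hH : 0 ≤ H j)
    (hj : j < N) :
    AntitoneOn F
      (Icc (triangleBreakpoint a b N (2 * j + 1)) (triangleBreakpoint a b N (2 * j + 2))) := by
  rw [triangleBreakpoint_two_mul_add_one, triangleBreakpoint_two_mul_add_two]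
  intro x hx y hy hxy
  have : 0 ≤ (b - a) / N / 2 := by have := sub_nonneg.2 hab; positivity
  rw [hF.2.2.2.2.2.2 j hj x hx, hF.2.2.2.2.2.2 j hj y hy]
  gcongr

theorem monotoneOn_or_antitoneOn_piece (hF : IsTriangleFun a b N H F) (hab : a ≤ b)
    (hH : ∀ j, 0 ≤ H j) {k : ℕ} (hk : k < 2 * N) :
    MonotoneOn F (Icc (triangleBreakpoint a b N k) (triangleBreakpoint a b N (k + 1))) ∨
      AntitoneOn F (Icc (triangleBreakpoint a b N k) (triangleBreakpoint a b N (k + 1))) := by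
  obtain ⟨j, rfl | rfl⟩ := Nat.even_or_odd' k
  · exact .inl (hF.monotoneOn_left_half hab (hH j) (by omega))
  · exact .inr (hF.antitoneOn_right_half hab (hH j) (by omega))

theorem abs_sub_apply_breakpoint (hF : IsTriangleFun a b N H F) (hH : ∀ j, 0 ≤ H j) {k : ℕ}
    (hk : k < 2 * N) :
    |F (triangleBreakpoint a b N (k + 1)) - F (triangleBreakpoint a b N k)| = H (k / 2) := by
  obtain ⟨j, rfl | rfl⟩ := Nat.even_or_odd' k
  · rw [hF.apply_breakpoint_two_mul_add_one (by omega), hF.apply_breakpoint_two_mul (by omega),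
      sub_zero, abs_of_nonneg (hH _), show 2 * j / 2 = j by omega]
  · rw [show 2 * j + 1 + 1 = 2 * (j + 1) by ring, hF.apply_breakpoint_two_mul (by omega),
      hF.apply_breakpoint_two_mul_add_one (by omega), zero_sub, abs_neg, abs_of_nonneg (hH _),
      show (2 * j + 1) / 2 = j by omega]

theorem sum_abs_sub_apply_breakpoint_rpow (hF : IsTriangleFun a b N H F) (hH : ∀ j, 0 ≤ H j)
    (p : ℝ) :
    ∑ k ∈ Finset.range (2 * N),
        |F (triangleBreakpoint a b N (k + 1)) - F (triangleBreakpoint a b N k)| ^ p =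
      2 * ∑ j ∈ Finset.range N, H j ^ p := by
  rw [Finset.sum_congr rfl fun k hk => by
      rw [hF.abs_sub_apply_breakpoint hH (Finset.mem_range.1 hk)],
    Finset.sum_range_two_mul_div_two (fun j => H j ^ p), nsmul_eq_mul, Nat.cast_ofNat]

theorem le_of_mem_cell (hF : IsTriangleFun a b N H F) (hab : a ≤ b) (hH : 0 ≤ H j) (hj : j < N)
    {z : ℝ}
    (hz : z ∈ Icc (triangleBreakpoint a b N (2 * j)) (triangleBreakpoint a b N (2 * j + 2))) :
    F z ≤ H j := by
  have hmid := triangleBreakpoint_monotone (N := N) hab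
  rw [← hF.apply_breakpoint_two_mul_add_one hj]
  rcases le_total z (triangleBreakpoint a b N (2 * j + 1)) with h | h
  · exact hF.monotoneOn_left_half hab hH hj ⟨hz.1, h⟩ ⟨hmid (by omega), le_rfl⟩ h
  · exact hF.antitoneOn_right_half hab hH hj ⟨le_rfl, hmid (by omega)⟩ ⟨h, hz.2⟩ h

theorem nonneg_of_mem_cell (hF : IsTriangleFun a b N H F) (hab : a ≤ b) (hH : 0 ≤ H j)
    (hj : j < N) {z : ℝ}
    (hz : z ∈ Icc (triangleBreakpoint a b N (2 * j)) (triangleBreakpoint a b N (2 * j + 2))) :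
    0 ≤ F z := by
  have hmid := triangleBreakpoint_monotone (N := N) hab
  rcases le_total z (triangleBreakpoint a b N (2 * j + 1)) with h | h
  · rw [← hF.apply_breakpoint_two_mul hj.le]
    exact hF.monotoneOn_left_half hab hH hj ⟨le_rfl, hmid (by omega)⟩ ⟨hz.1, h⟩ hz.1
  · rw [← hF.apply_breakpoint_two_mul (j := j + 1) hj]
    exact hF.antitoneOn_right_half hab hH hj ⟨h, hz.2⟩ ⟨hmid (by omega), le_rfl⟩ hz.2

theorem nonneg_of_mem_Icc_breakpoint (hF : IsTriangleFun a b N H F) (hab : a ≤ b)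
    (hH : ∀ j, 0 ≤ H j) {m : ℕ} (hm : m ≤ N) :
    ∀ z ∈ Icc a (triangleBreakpoint a b N (2 * m)), 0 ≤ F z := by
  induction m with
  | zero =>
    intro z hz
    have h0 := hF.apply_breakpoint_two_mul (Nat.zero_le N)
    rw [Nat.mul_zero, triangleBreakpoint_zero] at hz h0
    rw [le_antisymm hz.2 hz.1, h0]
  | succ m ih =>
    intro z hz
    rcases le_total z (triangleBreakpoint a b N (2 * m)) with h | h
    · exact ih (by omega) z ⟨hz.1, h⟩
    · exact hF.nonneg_of_mem_cell hab (hH m) (by omega) ⟨h, hz.2⟩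

theorem apply_eq_zero_of_le_or_le (hF : IsTriangleFun a b N H F) (hN : N ≠ 0) {z : ℝ}
    (hz : z ∈ Icc 0 1) (h : z ≤ a ∨ b ≤ z) : F z = 0 := by
  by_cases hzab : z ∈ Icc a b
  · have hz' : z = triangleBreakpoint a b N (2 * 0) ∨ z = triangleBreakpoint a b N (2 * N) := by
      rw [Nat.mul_zero, triangleBreakpoint_zero, triangleBreakpoint_two_mul_self hN]
      rcases h with h | h
      exacts [.inl (le_antisymm h hzab.1), .inr (le_antisymm hzab.2 h)]
    rcases hz' with rfl | rfl
    exacts [hF.apply_breakpoint_two_mul (Nat.zero_le N), hF.apply_breakpoint_two_mul le_rfl]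
  · exact hF.2.2.1 z hz hzab

theorem nonneg_of_mem_Icc_zero_one (hF : IsTriangleFun a b N H F) (hab : a ≤ b) (hN : N ≠ 0)
    (hH : ∀ j, 0 ≤ H j) {z : ℝ} (hz : z ∈ Icc 0 1) : 0 ≤ F z := by
  by_cases hzab : z ∈ Icc a b
  · rw [← triangleBreakpoint_two_mul_self (a := a) (b := b) hN] at hzab
    exact hF.nonneg_of_mem_Icc_breakpoint hab hH le_rfl z hzab
  · exact (hF.2.2.1 z hz hzab).ge

theorem incrementsDominatedBy_cell (hF : IsTriangleFun a b N H F) (hab : a ≤ b)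
    (hH : 0 ≤ H j) (hj : j < N) :
    IncrementsDominatedBy F (InTrianglePiece a b N) (triangleBreakpoint a b N (2 * j))
      (triangleBreakpoint a b N (2 * j + 2)) :=
  .split (c := triangleBreakpoint a b N (2 * j + 1))
    (.inr fun _ hz => (hF.le_of_mem_cell hab hH hj hz).trans_eq
      (hF.apply_breakpoint_two_mul_add_one hj).symm)
    (incrementsDominatedBy_trianglePiece (by omega))
    (incrementsDominatedBy_trianglePiece (by omega))

theorem incrementsDominatedBy_Icc_breakpoint (hF : IsTriangleFun a b N H F) (hab : a ≤ b)
    (hN : 0 < N) (hH : ∀ j, 0 ≤ H j) {m : ℕ} (hm : m ≤ N) :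
    IncrementsDominatedBy F (InTrianglePiece a b N) a (triangleBreakpoint a b N (2 * m)) := by
  induction m with
  | zero =>
    refine .of_eqOn_const (C := F a) (inTrianglePiece_self hab hN) fun z hz => ?_
    rw [Nat.mul_zero, triangleBreakpoint_zero] at hz
    rw [le_antisymm hz.2 hz.1]
  | succ m ih =>
    exact .split (c := triangleBreakpoint a b N (2 * m))
      (.inl fun z hz => (hF.apply_breakpoint_two_mul (by omega)).trans_le
        (hF.nonneg_of_mem_Icc_breakpoint hab hH hm z hz))
      (ih (by omega)) (hF.incrementsDominatedBy_cell hab (hH m) (by omega))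

theorem incrementsDominatedBy_zero_one (hF : IsTriangleFun a b N H F) (ha : 0 ≤ a)
    (hab : a ≤ b) (hb : b ≤ 1) (hN : 0 < N) (hH : ∀ j, 0 ≤ H j) :
    IncrementsDominatedBy F (InTrianglePiece a b N) 0 1 := by
  have hFa : F a = 0 := by simpa using hF.apply_breakpoint_two_mul (Nat.zero_le N)
  have hFb : F b = 0 := by
    simpa [triangleBreakpoint_two_mul_self hN.ne'] using hF.apply_breakpoint_two_mul le_rfl
  have hnonneg : ∀ z ∈ Icc (0 : ℝ) 1, 0 ≤ F z := fun z hz =>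
    hF.nonneg_of_mem_Icc_zero_one hab hN.ne' hH hz
  have hleft : IncrementsDominatedBy F (InTrianglePiece a b N) 0 a :=
    .of_eqOn_const (C := 0) (inTrianglePiece_self hab hN) fun z hz =>
      hF.apply_eq_zero_of_le_or_le hN.ne' ⟨hz.1, hz.2.trans (hab.trans hb)⟩ (.inl hz.2)
  have hmid : IncrementsDominatedBy F (InTrianglePiece a b N) a b := by
    simpa [triangleBreakpoint_two_mul_self hN.ne'] using
      hF.incrementsDominatedBy_Icc_breakpoint hab hN hH le_rfl
  have hright : IncrementsDominatedBy F (InTrianglePiece a b N) b 1 :=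
    .of_eqOn_const (C := 0) (inTrianglePiece_self hab hN) fun z hz =>
      hF.apply_eq_zero_of_le_or_le hN.ne' ⟨ha.trans (hab.trans hz.1), hz.2⟩ (.inr hz.1)
  exact .split (.inl fun z hz => hFb.trans_le (hnonneg z hz))
    (.split (.inl fun z hz => hFa.trans_le (hnonneg z ⟨hz.1, hz.2.trans hb⟩)) hleft hmid) hright

theorem sum_abs_sub_rpow_le (hF : IsTriangleFun a b N H F) (ha : 0 ≤ a) (hab : a ≤ b)
    (hb : b ≤ 1) (hN : 0 < N) (hH : ∀ j, 0 ≤ H j) {p : ℝ} (hp : 1 ≤ p) {A B : ℕ → ℝ}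
    (hAB : Nonoverlapping A B) (s : Finset ℕ) :
    ∑ n ∈ s, |F (B n) - F (A n)| ^ p ≤ 2 * ∑ j ∈ Finset.range N, H j ^ p := by
  choose α β hP hsub hinc using fun n =>
    hF.incrementsDominatedBy_zero_one ha hab hb hN hH (A n) (B n) (hAB.1 n).1 (hAB.1 n).2.1
      (hAB.1 n).2.2
  choose k hk hα hαβ hβ using hP
  have hdisj : Pairwise fun m n => Disjoint (Ioo (α m) (β m)) (Ioo (α n) (β n)) := fun m n hmn =>
    (disjoint_iff_inter_eq_empty.2 (hAB.2 m n hmn)).mono (hsub m) (hsub n)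
  calc ∑ n ∈ s, |F (B n) - F (A n)| ^ p ≤ ∑ n ∈ s, |F (β n) - F (α n)| ^ p :=
        Finset.sum_le_sum fun n _ => Real.rpow_le_rpow (abs_nonneg _) (hinc n) (by linarith)
    _ = ∑ i ∈ Finset.range (2 * N), ∑ n ∈ s with k n = i, |F (β n) - F (α n)| ^ p :=
        (Finset.sum_fiberwise_of_maps_to (fun n _ => Finset.mem_range.2 (hk n)) _).symm
    _ ≤ ∑ i ∈ Finset.range (2 * N),
          |F (triangleBreakpoint a b N (i + 1)) - F (triangleBreakpoint a b N i)| ^ p := by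
        refine Finset.sum_le_sum fun i hi => ?_
        have hpiece : ∀ n ∈ {n ∈ s | k n = i}, triangleBreakpoint a b N i ≤ α n ∧ α n ≤ β n ∧
            β n ≤ triangleBreakpoint a b N (i + 1) := fun n hn => by
          obtain rfl := (Finset.mem_filter.1 hn).2
          exact ⟨hα n, hαβ n, hβ n⟩
        have hle := triangleBreakpoint_monotone (N := N) hab i.le_succ
        rcases hF.monotoneOn_or_antitoneOn_piece hab hH (Finset.mem_range.1 hi) with h | h
        · exact h.sum_abs_sub_rpow_le hle hp hpiece (hdisj.set_pairwise _)
        · exact h.sum_abs_sub_rpow_le hle hp hpiece (hdisj.set_pairwise _)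
    _ = 2 * ∑ j ∈ Finset.range N, H j ^ p := hF.sum_abs_sub_apply_breakpoint_rpow hH p

theorem vpSum_breakpoints (hF : IsTriangleFun a b N H F) (hH : ∀ j, 0 ≤ H j) {p : ℝ}
    (hp : p ≠ 0) :
    vpSum p F (fun n => triangleBreakpoint a b N (min n (2 * N)))
        (fun n => triangleBreakpoint a b N (min (n + 1) (2 * N))) =
      ENNReal.ofReal (2 * ∑ j ∈ Finset.range N, H j ^ p) := by
  rw [vpSum, tsum_eq_sum (s := Finset.range (2 * N)) fun n hn => ?_]
  · rw [← ENNReal.ofReal_sum_of_nonneg fun _ _ => by positivity,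
      ← hF.sum_abs_sub_apply_breakpoint_rpow hH p]
    refine congrArg ENNReal.ofReal (Finset.sum_congr rfl fun n hn => ?_)
    have hn : n < 2 * N := Finset.mem_range.1 hn
    rw [min_eq_left hn.le, min_eq_left hn]
  · rw [Finset.mem_range, not_lt] at hn
    rw [min_eq_right hn, min_eq_right (hn.trans n.le_succ), sub_self, abs_zero, Real.zero_rpow hp,
      ENNReal.ofReal_zero]

end IsTriangleFun

/-- The `p`-variation of the triangle function equals `2^{1/p} (∑_{j<N} H_j^p)^{1/p}`. -/
theorem stmt4 (p : ℝ) (hp : 1 ≤ p) (a b : ℝ) (ha : 0 ≤ a) (hab : a < b) (hb : b ≤ 1)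
    (N : ℕ) (hN : 0 < N) (H : ℕ → ℝ) (hH : ∀ j, 0 ≤ H j)
    (F : ℝ → ℝ) (hF : IsTriangleFun a b N H F) :
    vp p F = ENNReal.ofReal ((2 : ℝ) ^ (1 / p) * (∑ j ∈ Finset.range N, H j ^ p) ^ (1 / p)) := by
  have hp₀ : 0 < p := by linarith
  have hsum : 0 ≤ ∑ j ∈ Finset.range N, H j ^ p :=
    Finset.sum_nonneg fun j _ => Real.rpow_nonneg (hH j) p
  rw [← Real.mul_rpow zero_le_two hsum,
    ← ENNReal.ofReal_rpow_of_nonneg (by positivity) (by positivity)]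
  exact vp_eq_rpow_of_forall_le hp₀.le
    (fun A B hAB => vpSum_le_ofReal (hF.sum_abs_sub_rpow_le ha hab.le hb hN hH hp hAB))
    (nonoverlapping_triangleBreakpoint ha hab.le hb hN.ne') (hF.vpSum_breakpoints hH hp₀.ne')
end
end

section
/- Let {I_j} be a sequence of nonoverlapping intervals contained in a period (so Σ_j |I_j| ≤ 1). For k ≥ 0 let σ_k = { j : 2^{-k-1} < |I_j| ≤ 2^{-k} }, and define δ_n by card(σ_0 ∪ ⋯ ∪ σ_n) = 2^n δ_n. Then Σ_{n=0}^∞ δ_n ≤ 4. -/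
open scoped ENNReal
open Filter MeasureTheory

noncomputable section

/-! Counting with weights, `∑ₙ card{j : 2^{-n-1} < |I_j|} 2^{-n} = ∑_j ∑_{n : 2^{-n-1} < |I_j|} 2^{-n}`,
and the inner sum is a geometric tail starting at the first `n` with `2^{-n-1} < |I_j|`, so it is
at most `4 |I_j|`. Summing over `j` gives at most `4 ∑_j |I_j| ≤ 4`. -/

theorem tsum_indicator_inv_two_pow_le (x : ℝ≥0∞) :
    ∑' n, {n : ℕ | (2⁻¹ : ℝ≥0∞) ^ (n + 1) < x}.indicator (fun n => 2⁻¹ ^ n) n ≤ 4 * x := by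
  classical
  by_cases hx : ∃ n, (2⁻¹ : ℝ≥0∞) ^ (n + 1) < x
  swap
  · push Not at hx
    simp [not_lt.mpr (hx _)]
  set m := Nat.find hx
  have hmem (n : ℕ) : (2⁻¹ : ℝ≥0∞) ^ (n + 1) < x ↔ m ≤ n := by
    refine ⟨Nat.find_min' hx, fun h => ?_⟩
    exact (pow_le_pow_of_le_one (by simp) (by norm_num) (by omega)).trans_lt (Nat.find_spec hx)
  calc ∑' n, {n : ℕ | (2⁻¹ : ℝ≥0∞) ^ (n + 1) < x}.indicator (fun n => 2⁻¹ ^ n) n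
      = ∑' n, (2⁻¹ : ℝ≥0∞) ^ (n + m) := by
        rw [← ENNReal.summable.sum_add_tsum_nat_add' (k := m)]
        simp only [Set.indicator_apply, Set.mem_ofPred_eq, hmem, Nat.le_add_left, if_true]
        rw [Finset.sum_eq_zero fun n hn => if_neg (not_le.2 (Finset.mem_range.1 hn)), zero_add]
    _ = 2 * 2⁻¹ ^ m := by
        simp_rw [pow_add, ENNReal.tsum_mul_right, ENNReal.tsum_geometric, ENNReal.one_sub_inv_two,
          inv_inv]
    _ = 2 * 2⁻¹ ^ m * (2 * 2⁻¹) := by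
        rw [ENNReal.mul_inv_cancel two_ne_zero ENNReal.ofNat_ne_top, mul_one]
    _ = 4 * 2⁻¹ ^ (m + 1) := by ring
    _ ≤ 4 * x := by gcongr; exact (Nat.find_spec hx).le

theorem tsum_encard_mul_inv_two_pow_le {ι : Type*} (L : ι → ℝ≥0∞) :
    ∑' n : ℕ, ({j | (2⁻¹ : ℝ≥0∞) ^ (n + 1) < L j}.encard : ℝ≥0∞) * 2⁻¹ ^ n
      ≤ 4 * ∑' j, L j := by
  calc ∑' n : ℕ, ({j | (2⁻¹ : ℝ≥0∞) ^ (n + 1) < L j}.encard : ℝ≥0∞) * 2⁻¹ ^ n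
      = ∑' n : ℕ, ∑' j, {j | (2⁻¹ : ℝ≥0∞) ^ (n + 1) < L j}.indicator (fun _ => 2⁻¹ ^ n) j := by
        refine tsum_congr fun n => ?_
        rw [← ENNReal.tsum_set_const]
        exact tsum_subtype _ fun _ => (2⁻¹ : ℝ≥0∞) ^ n
    _ = ∑' j, ∑' n, {n : ℕ | (2⁻¹ : ℝ≥0∞) ^ (n + 1) < L j}.indicator (fun n => 2⁻¹ ^ n) n := by
        rw [ENNReal.tsum_comm]
        exact tsum_congr fun j => tsum_congr fun n => by
          simp only [Set.indicator_apply, Set.mem_ofPred_eq]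
    _ ≤ ∑' j, 4 * L j := ENNReal.tsum_le_tsum fun j => tsum_indicator_inv_two_pow_le (L j)
    _ = 4 * ∑' j, L j := ENNReal.tsum_mul_left

theorem tsum_ofReal_sub_le_one_of_pairwise_disjoint {ι : Type*} [Countable ι] {a b : ι → ℝ}
    (ha : ∀ j, 0 ≤ a j) (hb : ∀ j, b j ≤ 1)
    (hdisj : Pairwise (Function.onFun Disjoint fun j => Set.Ioo (a j) (b j))) :
    ∑' j, ENNReal.ofReal (b j - a j) ≤ 1 := by
  calc ∑' j, ENNReal.ofReal (b j - a j) = volume (⋃ j, Set.Ioo (a j) (b j)) := by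
        simp_rw [measure_iUnion hdisj fun _ => measurableSet_Ioo, Real.volume_Ioo]
    _ ≤ volume (Set.Icc (0 : ℝ) 1) := by
        refine measure_mono (Set.iUnion_subset fun j x hx => ?_)
        exact ⟨(ha j).trans hx.1.le, hx.2.le.trans (hb j)⟩
    _ = 1 := by simp

theorem Nonoverlapping.tsum_ofReal_length_le_one {a b : ℕ → ℝ} (hab : Nonoverlapping a b) :
    ∑' j, ENNReal.ofReal (b j - a j) ≤ 1 :=
  tsum_ofReal_sub_le_one_of_pairwise_disjoint (fun j => (hab.1 j).1) (fun j => (hab.1 j).2.2)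
    fun m n h => Set.disjoint_iff_inter_eq_empty.2 (hab.2 m n h)

theorem ofReal_two_rpow_neg_sub_one (n : ℕ) :
    ENNReal.ofReal ((2 : ℝ) ^ (-(n : ℝ) - 1)) = 2⁻¹ ^ (n + 1) := by
  rw [show -(n : ℝ) - 1 = -((n + 1 : ℕ) : ℝ) by push_cast; ring, Real.rpow_neg zero_le_two,
    Real.rpow_natCast, ENNReal.ofReal_inv_of_pos (by positivity), ENNReal.ofReal_pow zero_le_two,
    ENNReal.ofReal_ofNat, ENNReal.inv_pow]

theorem two_rpow_neg_sub_one_lt_iff (n : ℕ) (t : ℝ) :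
    (2 : ℝ) ^ (-(n : ℝ) - 1) < t ↔ (2⁻¹ : ℝ≥0∞) ^ (n + 1) < ENNReal.ofReal t := by
  rw [← ofReal_two_rpow_neg_sub_one, ENNReal.ofReal_lt_ofReal_iff_of_nonneg (by positivity)]

-- `σ_0 ∪ ⋯ ∪ σ_n = {j : 2^{-n-1} < |I_j|}` because all lengths are `≤ 1`, so the `n`-th term is `δ_n`.
/-- If `{I_j}` are nonoverlapping intervals in a period, `σ_k = {j : 2^{-k-1} < |I_j| ≤ 2^{-k}}`
and `card(σ_0 ∪ ⋯ ∪ σ_n) = 2^n δ_n`, then `∑ δ_n ≤ 4`.  Since all lengths are `≤ 1`,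
`σ_0 ∪ ⋯ ∪ σ_n = {j : 2^{-n-1} < b_j - a_j}`. -/
theorem stmt6 (a b : ℕ → ℝ) (hab : Nonoverlapping a b) :
    ∑' n : ℕ, (({j : ℕ | (2 : ℝ) ^ (-(n : ℝ) - 1) < b j - a j}.ncard : ℝ) / 2 ^ n) ≤ 4 := by
  set S : ℕ → Set ℕ := fun n => {j | (2 : ℝ) ^ (-(n : ℝ) - 1) < b j - a j}
  have hcount : ∑' n, ((S n).encard : ℝ≥0∞) * 2⁻¹ ^ n ≤ 4 := by
    have h := tsum_encard_mul_inv_two_pow_le fun j => ENNReal.ofReal (b j - a j)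
    simp_rw [← two_rpow_neg_sub_one_lt_iff] at h
    exact h.trans (mul_le_of_le_one_right' hab.tsum_ofReal_length_le_one)
  calc ∑' n : ℕ, ((S n).ncard : ℝ) / 2 ^ n = (∑' n, ((S n).ncard : ℝ≥0∞) * 2⁻¹ ^ n).toReal := by
        rw [ENNReal.tsum_toReal_eq fun n => by finiteness]
        simp [div_eq_mul_inv]
    _ ≤ 4 := ENNReal.toReal_le_of_le_ofReal zero_le_four <| by
        refine (ENNReal.tsum_le_tsum fun n => ?_).trans (by simpa using hcount)
        gcongr
        exact_mod_cast ENat.natCast_toNat_le_self (S n).encard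
end
end

section
/- Let 1 < p < ∞ and p' = p/(p−1). Suppose f is a bounded 1-periodic function with f ∉ V_p, i.e. there is a sequence {J_n} of nonoverlapping intervals contained in a period with Σ_n |f(J_n)|^p = ∞. Then there exists a positive nondecreasing sequence Λ = {λ_n} with λ_n → ∞, Σ_n 1/λ_n = ∞, and Σ_n (1/λ_n)^{p'} < ∞, such that f ∉ ΛBV (i.e. v_Λ(f) = ∞). -/
open scoped ENNReal
open Filter MeasureTheory

noncomputable section

/-!
Replace the oscillations `d_n = |f(J_n)|` by a positive nonincreasing sequence `e` with
`∑ e_n ^ p = ∞` and `e_n ≤ d_{σ n}` for an injective reindexing `σ`: a constant `ε` if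
infinitely many `d_n` are at least `ε`, and the decreasing rearrangement of `d` otherwise.
With `S_n = ∑_{i ≤ n} e_i ^ p` put `λ_{n+1} = S_n / e_n ^ (p - 1)`, which is nondecreasing
because `S` increases and `e` decreases. Then `e_n / λ_{n+1} = e_n ^ p / S_n` and
`(1 / λ_{n+1}) ^ p' = e_n ^ p / S_n ^ p'`, so the Abel–Dini theorem makes the first series
diverge (hence `v_Λ(f) = ∞`, and `∑ 1 / λ_n = ∞` since `e` is bounded) and the second converge.
-/

open Finset

lemma mul_sub_div_rpow_le_sub_rpow {q a b : ℝ} (hq : 1 < q) (ha : 0 < a) (hab : a ≤ b) :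
    (q - 1) * ((b - a) / b ^ q) ≤ a ^ (1 - q) - b ^ (1 - q) := by
  have hb : 0 < b := ha.trans_le hab
  have hx : 0 < b / a := div_pos hb ha
  -- `x ^ s ≥ 1 + s log x ≥ 1 + s (1 - 1/x)` at `x = b / a`, `s = q - 1`
  have bernoulli : 1 + (q - 1) * (1 - a / b) ≤ (b / a) ^ (q - 1) := by
    have hlog : 1 - a / b ≤ Real.log (b / a) := by
      simpa using Real.one_sub_inv_le_log_of_pos hx
    calc 1 + (q - 1) * (1 - a / b) ≤ (q - 1) * Real.log (b / a) + 1 := by nlinarith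
      _ ≤ Real.exp ((q - 1) * Real.log (b / a)) := Real.add_one_le_exp _
      _ = (b / a) ^ (q - 1) := by rw [Real.rpow_def_of_pos hx, mul_comm]
  have ha_pow : a ^ (1 - q) = b ^ (1 - q) * (b / a) ^ (q - 1) := by
    rw [Real.div_rpow hb.le ha.le, mul_div_assoc', ← Real.rpow_add hb,
      show 1 - q + (q - 1) = 0 by ring, Real.rpow_zero, show 1 - q = -(q - 1) by ring,
      Real.rpow_neg ha.le, inv_eq_one_div]
  have hb_pow : (b - a) / b ^ q = b ^ (1 - q) * (1 - a / b) := by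
    rw [Real.rpow_sub hb, Real.rpow_one]
    field_simp
  rw [ha_pow, hb_pow]
  nlinarith [Real.rpow_pos_of_pos hb (1 - q)]

section PartialSums

variable {u : ℕ → ℝ}

lemma sum_range_succ_pos (hu : ∀ n, 0 < u n) (n : ℕ) : 0 < ∑ i ∈ range (n + 1), u i :=
  sum_pos (fun i _ => hu i) nonempty_range_add_one

lemma monotone_sum_range_succ (hu : ∀ n, 0 < u n) :
    Monotone fun n => ∑ i ∈ range (n + 1), u i :=
  monotone_nat_of_le_succ fun n => by
    rw [sum_range_succ _ (n + 1)]
    exact le_add_of_nonneg_right (hu _).le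

lemma not_summable_div_sum_range_succ (hu : ∀ n, 0 < u n) (hns : ¬Summable u) :
    ¬Summable fun n => u n / ∑ i ∈ range (n + 1), u i := by
  set S := fun n => ∑ i ∈ range (n + 1), u i
  have hS_top : Tendsto S atTop atTop :=
    ((not_summable_iff_tendsto_nat_atTop_of_nonneg fun n => (hu n).le).1 hns).comp
      (tendsto_add_atTop_nat 1)
  intro hsum
  obtain ⟨t, ht⟩ := summable_iff_vanishing.1 hsum (Set.Iio (1 / 2)) (Iio_mem_nhds one_half_pos)
  set N := t.sup id + 1
  obtain ⟨m, hm_large, hNm⟩ :=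
    ((hS_top.eventually_ge_atTop (2 * S N)).and (eventually_ge_atTop N)).exists
  have hdisj : Disjoint (Ico (N + 1) (m + 1)) t := disjoint_left.2 fun k hk hkt => by
    have : k ≤ t.sup id := le_sup (f := id) hkt
    simp only [mem_Ico] at hk
    omega
  -- the block `N < k ≤ m` alone contributes at least `(S m - S N) / S m ≥ 1 / 2`
  have hblock : (S m - S N) / S m ≤ ∑ k ∈ Ico (N + 1) (m + 1), u k / S k := by
    rw [← sum_Ico_eq_sub _ (by omega), sum_div]
    refine sum_le_sum fun k hk => ?_
    exact div_le_div_of_nonneg_left (hu k).le (sum_range_succ_pos hu k)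
      (monotone_sum_range_succ hu (by simp only [mem_Ico] at hk; omega))
  have hhalf : 1 / 2 ≤ (S m - S N) / S m := by
    rw [le_div_iff₀ (sum_range_succ_pos hu m)]
    linarith [sum_range_succ_pos hu N]
  exact absurd (ht _ hdisj) (not_lt.2 (hhalf.trans hblock))

lemma summable_div_sum_range_succ_rpow (hu : ∀ n, 0 < u n) {q : ℝ} (hq : 1 < q) :
    Summable fun n => u n / (∑ i ∈ range (n + 1), u i) ^ q := by
  set S := fun n => ∑ i ∈ range (n + 1), u i
  have hS := sum_range_succ_pos hu
  have hterm : ∀ n, u (n + 1) / S (n + 1) ^ q ≤ (S n ^ (1 - q) - S (n + 1) ^ (1 - q)) / (q - 1) :=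
    fun n => by
      rw [le_div_iff₀ (by linarith), mul_comm]
      have h := mul_sub_div_rpow_le_sub_rpow hq (hS n) (monotone_sum_range_succ hu n.le_succ)
      rwa [show S (n + 1) - S n = u (n + 1) by simp [S, sum_range_succ _ (n + 1)]] at h
  refine (summable_nat_add_iff 1).1 <| summable_of_sum_range_le (c := S 0 ^ (1 - q) / (q - 1))
    (fun n => div_nonneg (hu _).le (Real.rpow_nonneg (hS _).le q)) fun N => ?_
  calc ∑ n ∈ range N, u (n + 1) / S (n + 1) ^ q
      ≤ ∑ n ∈ range N, (S n ^ (1 - q) - S (n + 1) ^ (1 - q)) / (q - 1) :=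
        sum_le_sum fun n _ => hterm n
    _ = (S 0 ^ (1 - q) - S N ^ (1 - q)) / (q - 1) := by
      rw [← sum_div, sum_range_sub' (fun n => S n ^ (1 - q))]
    _ ≤ S 0 ^ (1 - q) / (q - 1) :=
      div_le_div_of_nonneg_right (sub_le_self _ (Real.rpow_nonneg (hS N).le _)) (by linarith)

end PartialSums

section Rearrangement

variable {d : ℕ → ℝ}

lemma exists_max_outside_finset (hfin : ∀ ε > 0, {n | ε ≤ d n}.Finite)
    (hpos : {n | 0 < d n}.Infinite) (s : Finset ℕ) :
    ∃ m ∉ s, 0 < d m ∧ ∀ k ∉ s, d k ≤ d m := by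
  obtain ⟨k₀, hk₀, hk₀s⟩ := hpos.exists_notMem_finset s
  obtain ⟨m, ⟨hm_ge, hms⟩, hm_max⟩ := Set.exists_max_image ({n | d k₀ ≤ d n} \ ↑s) d
    (hfin _ hk₀).sdiff ⟨k₀, (le_rfl : d k₀ ≤ d k₀), hk₀s⟩
  refine ⟨m, hms, hk₀.trans_le hm_ge, fun k hks => ?_⟩
  rcases le_or_gt (d k₀) (d k) with hk | hk
  · exact hm_max k ⟨hk, hks⟩
  · exact hk.le.trans hm_ge

lemma exists_antitone_enumeration (hfin : ∀ ε > 0, {n | ε ≤ d n}.Finite)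
    (hpos : {n | 0 < d n}.Infinite) :
    ∃ σ : ℕ → ℕ, Function.Injective σ ∧ Antitone (d ∘ σ) ∧ (∀ n, 0 < d (σ n)) ∧
      {n | 0 < d n} ⊆ Set.range σ := by
  choose g hg_notMem hg_pos hg_max using exists_max_outside_finset hfin hpos
  let S : ℕ → Finset ℕ := fun n => Nat.rec ∅ (fun _ s => insert (g s) s) n
  let σ : ℕ → ℕ := fun n => g (S n)
  have hS : ∀ n, S n = (range n).image σ := by
    intro n
    induction n with
    | zero => rfl
    | succ n ih => rw [range_add_one, image_insert, ← ih]
  have hmem : ∀ {j n}, j < n → σ j ∈ S n := fun h => by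
    rw [hS]; exact mem_image_of_mem σ (mem_range.2 h)
  have hS_mono : ∀ n, S n ⊆ S (n + 1) := fun n => subset_insert _ _
  have hσ_inj : Function.Injective σ := .of_lt_imp_ne fun i j hij hσ =>
    hg_notMem (S j) (show σ j ∈ S j from hσ ▸ hmem hij)
  refine ⟨σ, hσ_inj, antitone_nat_of_succ_le fun n => ?_, fun n => hg_pos _, fun k hk => ?_⟩
  · exact hg_max (S n) _ fun h => hg_notMem _ (hS_mono n h)
  · by_contra hk_range
    have hk_out : ∀ n, k ∉ S n := fun n h => by
      rw [hS] at h
      obtain ⟨j, -, rfl⟩ := mem_image.1 h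
      exact hk_range ⟨j, rfl⟩
    refine Set.infinite_range_of_injective hσ_inj ((hfin _ hk).subset ?_)
    rintro _ ⟨n, rfl⟩
    exact hg_max (S n) k (hk_out n)

lemma exists_antitone_minorant (hd : ∀ n, 0 ≤ d n) {p : ℝ} (hp : p ≠ 0)
    (hns : ¬Summable fun n => d n ^ p) :
    ∃ σ : ℕ → ℕ, Function.Injective σ ∧ ∃ e : ℕ → ℝ, Antitone e ∧ (∀ n, 0 < e n) ∧
      (∀ n, e n ≤ d (σ n)) ∧ ¬Summable fun n => e n ^ p := by
  by_cases hlarge : ∃ ε > 0, {n | ε ≤ d n}.Infinite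
  · obtain ⟨ε, hε, hinf⟩ := hlarge
    refine ⟨fun n => hinf.natEmbedding _ n, fun i j h => (hinf.natEmbedding _).injective
      (Subtype.ext h), fun _ => ε, antitone_const, fun _ => hε,
      fun n => (hinf.natEmbedding _ n).2, ?_⟩
    rw [summable_const_iff]
    exact (Real.rpow_pos_of_pos hε p).ne'
  push Not at hlarge
  have hzero : ∀ k, ¬0 < d k → d k ^ p = 0 := fun k hk => by
    rw [le_antisymm (not_lt.1 hk) (hd k), Real.zero_rpow hp]
  have hpos : {n | 0 < d n}.Infinite := fun hfin =>
    hns (summable_of_ne_finset_zero (s := hfin.toFinset) fun k hk =>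
      hzero k (by simpa using hk))
  obtain ⟨σ, hσ, hanti, hσ_pos, hrange⟩ := exists_antitone_enumeration hlarge hpos
  refine ⟨σ, hσ, d ∘ σ, hanti, hσ_pos, fun n => le_rfl, fun hsum => hns ?_⟩
  exact (hσ.summable_iff fun k hk => hzero k fun h => hk (hrange h)).1 hsum

end Rearrangement

section LambdaSeq

variable {p : ℝ} {e : ℕ → ℝ}

/-- `λ_{n+1} = (∑_{i ≤ n} e_i ^ p) / e_n ^ (p - 1)`; `λ_0` is a junk value that is never used. -/
def lambdaSeq (p : ℝ) (e : ℕ → ℝ) (n : ℕ) : ℝ :=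
  (∑ i ∈ range n, e i ^ p) / e (n - 1) ^ (p - 1)

lemma lambdaSeq_succ (n : ℕ) :
    lambdaSeq p e (n + 1) = (∑ i ∈ range (n + 1), e i ^ p) / e n ^ (p - 1) := rfl

lemma lambdaSeq_succ_pos (he_pos : ∀ n, 0 < e n) (n : ℕ) : 0 < lambdaSeq p e (n + 1) :=
  div_pos (sum_range_succ_pos (fun i => Real.rpow_pos_of_pos (he_pos i) p) n)
    (Real.rpow_pos_of_pos (he_pos n) _)

lemma div_lambdaSeq_succ (he_pos : ∀ n, 0 < e n) (n : ℕ) :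
    e n / lambdaSeq p e (n + 1) = e n ^ p / ∑ i ∈ range (n + 1), e i ^ p := by
  rw [lambdaSeq_succ, div_div_eq_mul_div, Real.rpow_sub_one (he_pos n).ne',
    mul_div_cancel₀ _ (he_pos n).ne']

lemma not_summable_div_lambdaSeq_succ (he_pos : ∀ n, 0 < e n) (hns : ¬Summable fun n => e n ^ p) :
    ¬Summable fun n => e n / lambdaSeq p e (n + 1) := by
  simpa only [div_lambdaSeq_succ he_pos] using
    not_summable_div_sum_range_succ (fun n => Real.rpow_pos_of_pos (he_pos n) p) hns

lemma summable_one_div_lambdaSeq_succ_rpow (he_pos : ∀ n, 0 < e n) (hp : 1 < p) :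
    Summable fun n => (1 / lambdaSeq p e (n + 1)) ^ (p / (p - 1)) := by
  have hp' : p - 1 ≠ 0 := by linarith
  have h (n : ℕ) : (1 / lambdaSeq p e (n + 1)) ^ (p / (p - 1)) =
      e n ^ p / (∑ i ∈ range (n + 1), e i ^ p) ^ (p / (p - 1)) := by
    rw [lambdaSeq_succ, one_div_div, Real.div_rpow (Real.rpow_nonneg (he_pos n).le _)
      (sum_range_succ_pos (fun i => Real.rpow_pos_of_pos (he_pos i) p) n).le,
      ← Real.rpow_mul (he_pos n).le, mul_div_cancel₀ _ hp']
  simp only [h]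
  exact summable_div_sum_range_succ_rpow (fun n => Real.rpow_pos_of_pos (he_pos n) p)
    (by rw [lt_div_iff₀ (by linarith)]; linarith)

lemma isLambdaSeq_lambdaSeq (he_pos : ∀ n, 0 < e n) (hp : 1 < p) (he_anti : Antitone e)
    (hns : ¬Summable fun n => e n ^ p) : IsLambdaSeq (lambdaSeq p e) := by
  have hu := fun i => Real.rpow_pos_of_pos (he_pos i) p
  have hpow_anti {m n : ℕ} (h : m ≤ n) : e n ^ (p - 1) ≤ e m ^ (p - 1) :=
    Real.rpow_le_rpow (he_pos n).le (he_anti h) (by linarith)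
  refine ⟨fun n hn => ?_, fun m n hm hmn => ?_, ?_, ?_⟩
  · obtain ⟨k, rfl⟩ := Nat.exists_eq_add_of_le' hn
    exact lambdaSeq_succ_pos he_pos k
  · obtain ⟨m, rfl⟩ := Nat.exists_eq_add_of_le' hm
    obtain ⟨n, rfl⟩ := Nat.exists_eq_add_of_le' (hm.trans hmn)
    exact div_le_div₀ (sum_range_succ_pos hu n).le (monotone_sum_range_succ hu (by omega))
      (Real.rpow_pos_of_pos (he_pos n) _) (hpow_anti (by omega))
  · -- `λ_{n+1} ≥ (∑_{i ≤ n} e_i ^ p) / e_0 ^ (p - 1)`, and the numerator diverges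
    have hS_top : Tendsto (fun n => ∑ i ∈ range (n + 1), e i ^ p) atTop atTop :=
      ((not_summable_iff_tendsto_nat_atTop_of_nonneg fun n => (hu n).le).1 hns).comp
        (tendsto_add_atTop_nat 1)
    refine (tendsto_add_atTop_iff_nat 1).1 <| tendsto_atTop_mono (fun n => ?_)
      (hS_top.atTop_div_const (Real.rpow_pos_of_pos (he_pos 0) (p - 1)))
    exact div_le_div_of_nonneg_left (sum_range_succ_pos hu n).le
      (Real.rpow_pos_of_pos (he_pos n) _) (hpow_anti n.zero_le)
  · -- `1 / λ_{n+1} ≥ e_n / (e_0 λ_{n+1})`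
    refine fun hsum => not_summable_div_lambdaSeq_succ he_pos hns <|
      (hsum.mul_left (e 0)).of_nonneg_of_le (fun n => ?_) fun n => ?_
    · exact div_nonneg (he_pos n).le (lambdaSeq_succ_pos he_pos n).le
    · rw [mul_one_div]
      exact div_le_div_of_nonneg_right (he_anti n.zero_le) (lambdaSeq_succ_pos he_pos n).le

end LambdaSeq

lemma Nonoverlapping.comp_injective {a b : ℕ → ℝ} (hab : Nonoverlapping a b) {σ : ℕ → ℕ}
    (hσ : Function.Injective σ) : Nonoverlapping (a ∘ σ) (b ∘ σ) :=
  ⟨fun n => hab.1 (σ n), fun _ _ hmn => hab.2 _ _ (hσ.ne hmn)⟩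

lemma tsum_le_vLam {a b : ℕ → ℝ} (hab : Nonoverlapping a b) (lam : ℕ → ℝ) (f : ℝ → ℝ) :
    ∑' n, ENNReal.ofReal (|f (b n) - f (a n)| / lam (n + 1)) ≤ vLam lam f :=
  le_iSup₂_of_le a b (le_iSup_of_le hab le_rfl)

lemma tsum_ofReal_eq_top {g : ℕ → ℝ} (hg : ∀ n, 0 ≤ g n) (hns : ¬Summable g) :
    ∑' n, ENNReal.ofReal (g n) = ⊤ := by
  by_contra h
  exact hns <| by simpa only [ENNReal.toReal_ofReal (hg _)] using ENNReal.summable_toReal h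

theorem stmt11_general (p : ℝ) (hp : 1 < p) (f : ℝ → ℝ)
    (hnot : ∃ a b : ℕ → ℝ, Nonoverlapping a b ∧
      ¬ Summable (fun n => |f (b n) - f (a n)| ^ p)) :
    ∃ lam : ℕ → ℝ, IsLambdaSeq lam ∧
      Summable (fun n : ℕ => (1 / lam (n + 1)) ^ (p / (p - 1))) ∧
      vLam lam f = ⊤ := by
  obtain ⟨a, b, hab, hns⟩ := hnot
  obtain ⟨σ, hσ, e, he_anti, he_pos, he_le, he_ns⟩ :=
    exists_antitone_minorant (fun n => abs_nonneg _) (by linarith) hns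
  refine ⟨lambdaSeq p e, isLambdaSeq_lambdaSeq he_pos hp he_anti he_ns,
    summable_one_div_lambdaSeq_succ_rpow he_pos hp, eq_top_iff.2 ?_⟩
  calc ⊤ = ∑' n, ENNReal.ofReal (e n / lambdaSeq p e (n + 1)) :=
        (tsum_ofReal_eq_top (fun n => div_nonneg (he_pos n).le (lambdaSeq_succ_pos he_pos n).le)
          (not_summable_div_lambdaSeq_succ he_pos he_ns)).symm
    _ ≤ ∑' n, ENNReal.ofReal (|f (b (σ n)) - f (a (σ n))| / lambdaSeq p e (n + 1)) :=
        ENNReal.tsum_le_tsum fun n => ENNReal.ofReal_le_ofReal <|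
          div_le_div_of_nonneg_right (he_le n) (lambdaSeq_succ_pos he_pos n).le
    _ ≤ vLam (lambdaSeq p e) f := tsum_le_vLam (hab.comp_injective hσ) _ f

/-- If a bounded 1-periodic `f` is not of bounded `p`-variation, then there is
`Λ ∈ 𝒮_{p'}` with `f ∉ ΛBV`. -/
theorem stmt11 (p : ℝ) (hp : 1 < p) (f : ℝ → ℝ) (hper : Function.Periodic f 1)
    (hbdd : ∃ M : ℝ, ∀ x, |f x| ≤ M)
    (hnot : ∃ a b : ℕ → ℝ, Nonoverlapping a b ∧
      ¬ Summable (fun n => |f (b n) - f (a n)| ^ p)) :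
    ∃ lam : ℕ → ℝ, IsLambdaSeq lam ∧
      Summable (fun n : ℕ => (1 / lam (n + 1)) ^ (p / (p - 1))) ∧
      vLam lam f = ⊤ :=
  stmt11_general p hp f hnot
end
end
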